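/- arXiv:1611.07793 — 2 statements merged into one kernel-verified Lean document; each statement's English description precedes it below -/
import Mathlib

section
/- Let pc_n be the total number of left children summed over all treeshelves of size n avoiding the pattern (left child having a right child). Then for every n ≥ 0, pc_n = (n+1)·b_n − b_{n+1}, where b_n denotes the n-th Bell number (the number of set partitions of {1,…,n}). Equivalently, the exponential generating function of (pc_n) is (z e^z − e^z + 1) e^{e^z − 1}. -/
/-- Binary trees with natural-number labels, where each child slot (left/right)
is explicit; `leaf` denotes the absence of a subtree.  A *treeshelf* will be such
a tree whose labels are exactly `{1, …, n}` and increase away from the root. -/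
inductive TShelf : Type where
  | leaf : TShelf
  | node : ℕ → TShelf → TShelf → TShelf

namespace TShelf

/-- Whether the tree is nonempty (i.e. an actual node). -/
def isNode : TShelf → Bool
  | leaf => false
  | node _ _ _ => true

/-- The label of the root (junk value `0` for the empty tree). -/
def rootLabel : TShelf → ℕ
  | leaf => 0
  | node a _ _ => a

/-- The left subtree. -/
def left : TShelf → TShelf
  | leaf => leaf
  | node _ l _ => l

/-- The right subtree. -/
def right : TShelf → TShelf
  | leaf => leaf
  | node _ _ r => r

/-- The multiset of labels occurring in the tree. -/
def labels : TShelf → Multiset ℕ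
  | leaf => 0
  | node a l r => a ::ₘ (l.labels + r.labels)

/-- Every child's label is greater than its parent's label. -/
def increasing : TShelf → Bool
  | leaf => true
  | node a l r =>
      (!l.isNode || decide (a < l.rootLabel)) &&
      (!r.isNode || decide (a < r.rootLabel)) &&
      l.increasing && r.increasing

/-- The number of left children (nodes attached to their parent as a left child). -/
def numLeft : TShelf → ℕ
  | leaf => 0
  | node _ l r => (if l.isNode then 1 else 0) + l.numLeft + r.numLeft

/-- `t` is a treeshelf of size `n`: its nodes are labeled bijectively by
`{1, …, n}` and labels increase from parents to children. -/
def IsShelf (n : ℕ) (t : TShelf) : Prop :=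
  t.labels = (Finset.Icc 1 n).val ∧ t.increasing = true

/-- Avoidance of the pattern "a left child having a right child":
no node is simultaneously the left child of its parent and has a right child. -/
def avoidsLR : TShelf → Bool
  | leaf => true
  | node _ l r => !(l.isNode && l.right.isNode) && l.avoidsLR && r.avoidsLR

/-- Avoidance of the pattern "a left child having a left child":
no node is simultaneously the left child of its parent and has a left child. -/
def avoidsLL : TShelf → Bool
  | leaf => true
  | node _ l r => !(l.isNode && l.left.isNode) && l.avoidsLL && r.avoidsLL

/-- Avoidance of the pattern "left label smaller than right label": no node has
both a left and a right child with the left child's label smaller than the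
right child's label. -/
def avoidsLess : TShelf → Bool
  | leaf => true
  | node _ l r =>
      !(l.isNode && r.isNode && decide (l.rootLabel < r.rootLabel)) &&
      l.avoidsLess && r.avoidsLess

/-- Canonical representation of unordered sibling pairs: whenever a node has two
children, the left one carries the smaller label.  Trees satisfying this are
canonical representatives of trees whose sibling pairs are unordered. -/
def pairCanon : TShelf → Bool
  | leaf => true
  | node _ l r =>
      (!(l.isNode && r.isNode) || decide (l.rootLabel < r.rootLabel)) &&
      l.pairCanon && r.pairCanon

/-- Canonical representation of untagged only children: every only child is a
right child.  Together with `pairCanon`, trees satisfying this are canonical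
representatives of unordered binary increasing trees. -/
def singleRight : TShelf → Bool
  | leaf => true
  | node _ l r => (!l.isNode || r.isNode) && l.singleRight && r.singleRight

end TShelf

/-!
An LR-avoiding treeshelf is a right spine of nodes, each carrying a chain of left children.
Reading each spine node together with its left chain as a block gives a bijection with the set
partitions of `{1, …, n}`: increasingness forces each chain to list its block in increasing order
and the spine to list the blocks by increasing minimum. The left children are exactly the
non-minimal elements of the blocks, so a partition into `k` blocks contributes `n - k`, and
`pc n = n * b n - ∑_P #P`. Finally `∑_P (#P + 1) = b (n + 1)`: the new element `n + 1` either
forms a singleton block or joins one of the blocks of a partition of `{1, …, n}`.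
-/

open Finset

namespace Finpartition

lemma parts_avoid_of_mem {α : Type*} [GeneralizedBooleanAlgebra α] [DecidableEq α] {a b : α}
    (P : Finpartition a) (hb : b ∈ P.parts) : (P.avoid b).parts = P.parts.erase b := by
  ext c
  rw [P.mem_avoid, mem_erase]
  constructor
  · rintro ⟨d, hd, hdb, rfl⟩
    have hne : d ≠ b := by rintro rfl; exact hdb le_rfl
    have hdisj : Disjoint d b := P.disjoint hd hb hne
    rw [hdisj.sdiff_eq_left]
    exact ⟨hne, hd⟩
  · rintro ⟨hcb, hc⟩
    have hdisj : Disjoint c b := P.disjoint hc hb hcb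
    exact ⟨c, hc, fun hle => P.ne_bot hc (hdisj.eq_bot_of_le hle), hdisj.sdiff_eq_left⟩

variable {α : Type*} [DecidableEq α] {s : Finset α} {x : α}

lemma notMem_of_mem_parts (P : Finpartition s) (hx : x ∉ s) {c : Finset α} (hc : c ∈ P.parts) :
    x ∉ c :=
  fun h => hx (P.le hc h)

lemma insert_ne_singleton_of_mem_parts (P : Finpartition s) (hx : x ∉ s) {c : Finset α}
    (hc : c ∈ P.parts) : insert x c ≠ {x} := by
  intro h
  obtain ⟨y, hy⟩ := P.nonempty_of_mem_parts hc
  have hyx : y = x := mem_singleton.1 (h ▸ mem_insert_of_mem hy)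
  exact P.notMem_of_mem_parts hx hc (hyx ▸ hy)

def insertElem (hx : x ∉ s) : (Σ P : Finpartition s, Option P.parts) → Finpartition (insert x s)
  | ⟨P, none⟩ => P.extend (b := {x}) (singleton_ne_empty x) (disjoint_singleton_right.2 hx)
      (by rw [sup_eq_union, union_comm, ← insert_eq])
  | ⟨P, some ⟨b, hb⟩⟩ => (P.avoid b).extend (b := insert x b) (insert_ne_empty x b)
      (disjoint_insert_right.2 ⟨fun h => hx (mem_sdiff.1 h).1, sdiff_disjoint⟩)
      (by rw [sup_eq_union, union_insert, sdiff_union_of_subset (P.le hb)])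

variable (hx : x ∉ s) (P : Finpartition s)

lemma parts_insertElem_none : (insertElem hx ⟨P, none⟩).parts = insert {x} P.parts := by
  rw [insertElem, extend_parts]

lemma parts_insertElem_some (b : P.parts) :
    (insertElem hx ⟨P, some b⟩).parts = insert (insert x (b : Finset α)) (P.parts.erase b) := by
  rw [insertElem, extend_parts, P.parts_avoid_of_mem b.2]

lemma part_insertElem_none : (insertElem hx ⟨P, none⟩).part x = {x} :=
  part_eq_of_mem _ (by rw [parts_insertElem_none]; exact mem_insert_self _ _)
    (mem_singleton_self x)

lemma part_insertElem_some (b : P.parts) :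
    (insertElem hx ⟨P, some b⟩).part x = insert x (b : Finset α) :=
  part_eq_of_mem _ (by rw [parts_insertElem_some]; exact mem_insert_self _ _) (mem_insert_self x b)

lemma parts_avoid_singleton_insertElem (o : Option P.parts) :
    ((insertElem hx ⟨P, o⟩).avoid {x}).parts = P.parts := by
  have himage {t : Finset (Finset α)} (ht : t ⊆ P.parts) : t.image (· \ {x}) = t := by
    conv_rhs => rw [← image_id (s := t)]
    exact image_congr fun c hc => by
      rw [sdiff_singleton_eq_erase, erase_eq_of_notMem (P.notMem_of_mem_parts hx (ht hc)), id_eq]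
  simp only [avoid, ofErase]
  cases o with
  | none =>
    rw [parts_insertElem_none, image_insert, sdiff_self, himage subset_rfl]
    exact erase_insert P.empty_notMem_parts
  | some b =>
    rw [parts_insertElem_some, image_insert, insert_sdiff_of_mem _ (mem_singleton_self x),
      sdiff_singleton_eq_erase, erase_eq_of_notMem (P.notMem_of_mem_parts hx b.2),
      himage (erase_subset _ _), insert_erase b.2]
    exact erase_eq_of_notMem P.empty_notMem_parts

lemma insertElem_injective : Function.Injective (insertElem hx) := by
  rintro ⟨P, o⟩ ⟨Q, o'⟩ h
  obtain rfl : P = Q := Finpartition.ext <| by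
    rw [← parts_avoid_singleton_insertElem hx P o, h, parts_avoid_singleton_insertElem]
  have hpart := congrArg (·.part x) h
  rcases o with _ | b <;> rcases o' with _ | c <;>
    simp only [part_insertElem_none, part_insertElem_some] at hpart
  · rfl
  · exact (P.insert_ne_singleton_of_mem_parts hx c.2 hpart.symm).elim
  · exact (P.insert_ne_singleton_of_mem_parts hx b.2 hpart).elim
  · have hbc := congrArg (·.erase x) hpart
    simp only [erase_insert (P.notMem_of_mem_parts hx b.2),
      erase_insert (P.notMem_of_mem_parts hx c.2)] at hbc
    rw [Subtype.ext hbc]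

lemma insertElem_surjective : Function.Surjective (insertElem hx) := by
  intro Q
  have hxs : x ∈ insert x s := mem_insert_self x s
  have hc : Q.part x ∈ Q.parts := Q.part_mem.2 hxs
  have hxc : x ∈ Q.part x := Q.mem_part_self.2 hxs
  by_cases hcx : Q.part x = {x}
  · rw [hcx] at hc
    refine ⟨⟨(Q.avoid {x}).copy ?_, none⟩, Finpartition.ext ?_⟩
    · rw [insert_sdiff_of_mem _ (mem_singleton_self x), sdiff_singleton_eq_erase,
        erase_eq_of_notMem hx]
    · rw [parts_insertElem_none, copy_parts, Q.parts_avoid_of_mem hc, insert_erase hc]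
  · set b := (Q.part x).erase x
    have hb : b.Nonempty := (erase_nonempty hxc).2 ((nontrivial_iff_ne_singleton hxc).2 hcx)
    have hbs : b ⊆ s := subset_insert_iff.1 (Q.le hc)
    have hsdiff : insert x s \ Q.part x = s \ b := by grind
    let P : Finpartition s := ((Q.avoid (Q.part x)).copy hsdiff).extend (b := b) hb.ne_empty
      sdiff_disjoint (sdiff_union_of_subset hbs)
    have hP : P.parts = insert b (Q.parts.erase (Q.part x)) := by
      rw [extend_parts, copy_parts, Q.parts_avoid_of_mem hc]
    have hbP : b ∈ P.parts := hP ▸ mem_insert_self _ _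
    have hbQ : b ∉ Q.parts := fun h => by
      obtain ⟨y, hy⟩ := hb
      have hbc : b = Q.part x := Q.eq_of_mem_parts h hc hy (mem_of_mem_erase hy)
      exact notMem_erase x (Q.part x) (by rw [← hbc] at hxc; exact hxc)
    refine ⟨⟨P, some ⟨b, hbP⟩⟩, Finpartition.ext ?_⟩
    rw [parts_insertElem_some, Subtype.coe_mk, insert_erase hxc, hP,
      erase_insert (fun h => hbQ (mem_of_mem_erase h)), insert_erase hc]

end Finpartition

theorem card_finpartition_insert {α : Type*} [DecidableEq α] {s : Finset α} {x : α}
    (hx : x ∉ s) :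
    Fintype.card (Finpartition (insert x s)) = ∑ P : Finpartition s, (#P.parts + 1) := by
  rw [← Fintype.card_of_bijective ⟨Finpartition.insertElem_injective hx,
    Finpartition.insertElem_surjective hx⟩, Fintype.card_sigma]
  simp only [Fintype.card_option, Fintype.card_coe]

namespace TShelf

def leftChain : List ℕ → TShelf
  | [] => leaf
  | a :: L => node a (leftChain L) leaf

@[simp] lemma labels_leftChain (L : List ℕ) : (leftChain L).labels = L := by
  induction L with
  | nil => rfl
  | cons a L ih => simp [leftChain, labels, ih]

lemma isNode_of_mem_labels {t : TShelf} {x : ℕ} (hx : x ∈ t.labels) : t.isNode := by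
  cases t with
  | leaf => simp [labels] at hx
  | node => rfl

lemma rootLabel_le_of_increasing {t : TShelf} (h : t.increasing) :
    ∀ x ∈ t.labels, t.rootLabel ≤ x := by
  induction t with
  | leaf => simp [labels]
  | node a l r ihl ihr =>
    simp only [increasing, Bool.and_eq_true, Bool.or_eq_true, Bool.not_eq_true',
      decide_eq_true_eq] at h
    obtain ⟨⟨⟨hl, hr⟩, hl'⟩, hr'⟩ := h
    simp only [labels, Multiset.mem_cons, Multiset.mem_add, rootLabel]
    rintro x (rfl | hx | hx)
    · rfl
    · have hal := hl.resolve_left (by simp [isNode_of_mem_labels hx])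
      exact (hal.trans_le (ihl hl' x hx)).le
    · have har := hr.resolve_left (by simp [isNode_of_mem_labels hx])
      exact (har.trans_le (ihr hr' x hx)).le

lemma not_isNode_or_lt_rootLabel_iff {t : TShelf} (ht : t.increasing) (a : ℕ) :
    (!t.isNode || decide (a < t.rootLabel)) = true ↔ ∀ x ∈ t.labels, a < x := by
  cases t with
  | leaf => simp [isNode, labels]
  | node b l r =>
    change (!true || decide (a < b)) = true ↔ _
    rw [Bool.not_true, Bool.false_or, decide_eq_true_iff]
    exact ⟨fun hab x hx => hab.trans_le (rootLabel_le_of_increasing ht x hx),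
      fun h => h b (Multiset.mem_cons_self b _)⟩

lemma increasing_node_iff {a : ℕ} {l r : TShelf} :
    (node a l r).increasing ↔
      (∀ x ∈ l.labels, a < x) ∧ (∀ x ∈ r.labels, a < x) ∧ l.increasing ∧ r.increasing := by
  simp only [increasing, Bool.and_eq_true]
  constructor
  · rintro ⟨⟨⟨hl, hr⟩, hl'⟩, hr'⟩
    exact ⟨(not_isNode_or_lt_rootLabel_iff hl' a).1 hl,
      (not_isNode_or_lt_rootLabel_iff hr' a).1 hr, hl', hr'⟩
  · rintro ⟨hl, hr, hl', hr'⟩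
    exact ⟨⟨⟨(not_isNode_or_lt_rootLabel_iff hl' a).2 hl,
      (not_isNode_or_lt_rootLabel_iff hr' a).2 hr⟩, hl'⟩, hr'⟩

lemma increasing_leftChain_iff {L : List ℕ} :
    (leftChain L).increasing ↔ L.Pairwise (· < ·) := by
  induction L with
  | nil => simp [leftChain, increasing]
  | cons a L ih =>
    rw [leftChain, increasing_node_iff, ih, List.pairwise_cons]
    simp [labels, increasing]

lemma avoidsLR_node_leftChain (a : ℕ) (L : List ℕ) (r : TShelf) :
    (node a (leftChain L) r).avoidsLR = r.avoidsLR := by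
  induction L generalizing a r with
  | nil => rfl
  | cons b L ih =>
    rw [leftChain, avoidsLR.eq_2, ih b leaf]
    rfl

lemma exists_leftChain_of_avoidsLR {a : ℕ} {l r : TShelf} (h : (node a l r).avoidsLR) :
    ∃ L, l = leftChain L := by
  induction l generalizing a r with
  | leaf => exact ⟨[], rfl⟩
  | node b l' r' ihl _ =>
    cases r' with
    | leaf =>
      rw [avoidsLR, Bool.and_eq_true, Bool.and_eq_true] at h
      obtain ⟨L, rfl⟩ := ihl h.1.2
      exact ⟨b :: L, rfl⟩
    | node => simp [avoidsLR, isNode, right] at h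

lemma numLeft_node_leftChain (a : ℕ) (L : List ℕ) (r : TShelf) :
    (node a (leftChain L) r).numLeft = L.length + r.numLeft := by
  induction L generalizing a r with
  | nil => simp [leftChain, numLeft, isNode]
  | cons b L ih =>
    rw [leftChain, numLeft.eq_2, ih b leaf]
    simp only [isNode, ↓reduceIte, numLeft, add_zero, List.length_cons]
    omega

def blocks : TShelf → Finset (Finset ℕ)
  | leaf => ∅
  | node a l r => insert (insert a l.labels.toFinset) r.blocks

def ofFinpartition (s : Finset ℕ) (P : Finpartition s) : TShelf :=
  if hs : s.Nonempty then
    node (s.min' hs) (leftChain (((P.part (s.min' hs)).erase (s.min' hs)).sort))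
      (ofFinpartition (s \ P.part (s.min' hs)) (P.avoid (P.part (s.min' hs))))
  else leaf
termination_by #s
decreasing_by
  exact card_lt_card (sdiff_ssubset (P.part_subset _) (P.part_nonempty.2 (s.min'_mem hs)))

lemma ofFinpartition_eq_node {s : Finset ℕ} (hs : s.Nonempty) (P : Finpartition s)
    {b : Finset ℕ} (hb : b ∈ P.parts) (hmin : s.min' hs ∈ b) :
    ofFinpartition s P =
      node (s.min' hs) (leftChain ((b.erase (s.min' hs)).sort))
        (ofFinpartition (s \ b) (P.avoid b)) := by
  rw [ofFinpartition, dif_pos hs, P.part_eq_of_mem hb hmin]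

lemma ofFinpartition_empty (P : Finpartition (∅ : Finset ℕ)) : ofFinpartition ∅ P = leaf := by
  rw [ofFinpartition, dif_neg Finset.not_nonempty_empty]

section

variable {s : Finset ℕ} (P : Finpartition s)

lemma labels_ofFinpartition : (ofFinpartition s P).labels = s.val := by
  fun_induction ofFinpartition s P with
  | case1 s P hs ih =>
    have hm := P.mem_part_self.2 (s.min'_mem hs)
    rw [labels, labels_leftChain, ih, sort_eq, ← Multiset.cons_add, erase_val,
      Multiset.cons_erase hm, sdiff_val, add_tsub_cancel_of_le (val_le_iff.2 (P.part_subset _))]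
  | case2 s P hs =>
    obtain rfl := not_nonempty_iff_eq_empty.1 hs
    rfl

lemma increasing_ofFinpartition : (ofFinpartition s P).increasing := by
  fun_induction ofFinpartition s P with
  | case1 s P hs ih =>
    have hmin {x} (hx : x ∈ s) (hne : x ≠ s.min' hs) : s.min' hs < x :=
      min'_lt_of_mem_erase_min' _ _ (mem_erase.2 ⟨hne, hx⟩)
    refine increasing_node_iff.2 ⟨fun x hx => ?_, fun x hx => ?_,
      increasing_leftChain_iff.2 (sortedLT_sort _).pairwise, ih⟩
    · rw [labels_leftChain, Multiset.mem_coe, mem_sort, mem_erase] at hx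
      exact hmin (P.part_subset _ hx.2) hx.1
    · rw [labels_ofFinpartition, mem_val, mem_sdiff] at hx
      exact hmin hx.1 fun h => hx.2 (by rw [h]; exact P.mem_part_self.2 (s.min'_mem hs))
  | case2 => rfl

lemma avoidsLR_ofFinpartition : (ofFinpartition s P).avoidsLR := by
  fun_induction ofFinpartition s P with
  | case1 s P hs ih => rwa [avoidsLR_node_leftChain]
  | case2 => rfl

lemma numLeft_ofFinpartition_add_card_parts :
    (ofFinpartition s P).numLeft + #P.parts = #s := by
  fun_induction ofFinpartition s P with
  | case1 s P hs ih =>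
    have hm := P.mem_part_self.2 (s.min'_mem hs)
    have hb := P.part_mem.2 (s.min'_mem hs)
    rw [P.parts_avoid_of_mem hb, card_erase_of_mem hb] at ih
    have := card_erase_add_one hm
    have := card_sdiff_add_card_eq_card (P.part_subset (s.min' hs))
    have := card_pos.2 ⟨_, hb⟩
    rw [numLeft_node_leftChain, length_sort]
    omega
  | case2 s P hs =>
    obtain rfl := not_nonempty_iff_eq_empty.1 hs
    simp [numLeft, P.parts_eq_empty_iff.2 rfl]

lemma blocks_ofFinpartition : (ofFinpartition s P).blocks = P.parts := by
  fun_induction ofFinpartition s P with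
  | case1 s P hs ih =>
    have hb := P.part_mem.2 (s.min'_mem hs)
    rw [blocks, ih, labels_leftChain, sort_eq, val_toFinset,
      insert_erase (P.mem_part_self.2 (s.min'_mem hs)), P.parts_avoid_of_mem hb, insert_erase hb]
  | case2 s P hs =>
    obtain rfl := not_nonempty_iff_eq_empty.1 hs
    exact (P.parts_eq_empty_iff.2 rfl).symm

end

lemma ofFinpartition_injective (s : Finset ℕ) : Function.Injective (ofFinpartition s) :=
  fun P Q h => Finpartition.ext <| by rw [← blocks_ofFinpartition P, h, blocks_ofFinpartition]

lemma exists_ofFinpartition_eq {t : TShelf} {s : Finset ℕ} (hlab : t.labels = s.val)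
    (hinc : t.increasing) (hav : t.avoidsLR) : ∃ P : Finpartition s, ofFinpartition s P = t := by
  induction t generalizing s with
  | leaf =>
    obtain rfl : s = ∅ := val_eq_zero.1 hlab.symm
    exact ⟨⊥, ofFinpartition_empty _⟩
  | node a l r _ ihr =>
    obtain ⟨L, rfl⟩ := exists_leftChain_of_avoidsLR hav
    have has : a ∈ s := by rw [← mem_val, ← hlab]; exact Multiset.mem_cons_self a _
    have hmin : s.min' ⟨a, has⟩ = a := le_antisymm (min'_le s a has)
      (le_min' s _ a fun y hy => rootLabel_le_of_increasing hinc y (hlab ▸ hy))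
    rw [avoidsLR_node_leftChain] at hav
    obtain ⟨haL, -, hL, hr⟩ := increasing_node_iff.1 hinc
    rw [labels_leftChain] at haL
    rw [increasing_leftChain_iff] at hL
    set b := (a :: L).toFinset
    have hsval : s.val = b.val + r.labels := by
      rw [← hlab, List.toFinset_val, List.dedup_eq_self.2 (List.pairwise_cons.2 ⟨haL, hL⟩).nodup,
        labels, labels_leftChain, ← Multiset.cons_coe, Multiset.cons_add]
    have hbs : b ⊆ s := val_le_iff.1 (hsval ▸ Multiset.le_add_right _ _)
    have hab : a ∈ b := List.mem_toFinset.2 List.mem_cons_self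
    obtain ⟨P', rfl⟩ := ihr (s := s \ b) (by rw [sdiff_val, hsval, add_tsub_cancel_left]) hr hav
    let P := P'.extend (b := b) (by simp [b]) sdiff_disjoint (sdiff_union_of_subset hbs)
    have hbP : b ∈ P.parts := mem_insert_self _ _
    have hsort : (b.erase a).sort = L := by
      rw [show b = insert a L.toFinset from List.toFinset_cons,
        erase_insert fun h => (haL a (List.mem_toFinset.1 h)).false]
      exact (List.toFinset_sort _ hL.nodup).2 (hL.imp le_of_lt)
    have havoid : P.avoid b = P' := Finpartition.ext <| by
      rw [P.parts_avoid_of_mem hbP]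
      exact erase_insert fun h => (mem_sdiff.1 (P'.le h hab)).2 hab
    refine ⟨P, ?_⟩
    rw [ofFinpartition_eq_node ⟨a, has⟩ P hbP (by rwa [hmin]), hmin, hsort, havoid]

lemma setOf_avoidsLR_eq_range_ofFinpartition (s : Finset ℕ) :
    {t : TShelf | t.labels = s.val ∧ t.increasing ∧ t.avoidsLR} =
      Set.range (ofFinpartition s) := by
  ext t
  constructor
  · rintro ⟨hlab, hinc, hav⟩
    exact exists_ofFinpartition_eq hlab hinc hav
  · rintro ⟨P, rfl⟩
    exact ⟨labels_ofFinpartition P, increasing_ofFinpartition P, avoidsLR_ofFinpartition P⟩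

end TShelf

open TShelf

/-- the popularity `pc n` of left children among treeshelves of
size `n` avoiding "left child having a right child" satisfies
`pc n = (n+1)·b n − b (n+1)` with `b` the Bell numbers. -/
theorem stmt6 (n : ℕ) :
    ((∑ᶠ t ∈ {t : TShelf | TShelf.IsShelf n t ∧ t.avoidsLR = true}, t.numLeft : ℕ) : ℤ) =
      ((n : ℤ) + 1) * (Nat.card (Finpartition (Finset.Icc 1 n)) : ℤ) -
        (Nat.card (Finpartition (Finset.Icc 1 (n + 1))) : ℤ) := by
  have hrange : {t | IsShelf n t ∧ t.avoidsLR} = Set.range (ofFinpartition (Icc 1 n)) := by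
    simp only [← setOf_avoidsLR_eq_range_ofFinpartition, IsShelf, and_assoc]
  have hnumLeft (P : Finpartition (Icc 1 n)) :
      ((ofFinpartition _ P).numLeft : ℤ) = n - #P.parts := by
    have := numLeft_ofFinpartition_add_card_parts P
    rw [Nat.card_Icc, add_tsub_cancel_right] at this
    omega
  rw [hrange, finsum_mem_range (ofFinpartition_injective _), finsum_eq_sum_of_fintype,
    Nat.card_eq_fintype_card, Nat.card_eq_fintype_card,
    ← insert_Icc_right_eq_Icc_add_one (by omega), card_finpartition_insert (by simp)]
  push_cast
  simp only [hnumLeft, sum_sub_distrib, sum_add_distrib, sum_const, card_univ, nsmul_eq_mul]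
  ring
end

section
/- For every n ≥ 0, the number of treeshelves of size n avoiding the pattern (left child having a left child) equals e_n, where the sequence (e_n) is defined by the exponential generating function identity ∑_{n≥0} e_n z^n/n! = 1/(1 − sin z) (a shift of the Euler/zigzag numbers). -/
/-!
Removing the root of an LL-avoiding treeshelf (its smallest label) leaves a left subtree whose
root has no left child and an arbitrary LL-avoiding right subtree; removing the root of a tree
whose root has no left child leaves an arbitrary LL-avoiding tree. Hence both counts obey the
recursion `E (n + 2) = ∑ k, (n choose k) * E k * E (n - k + 1)` of the Euler zigzag numbers:
there are `E (n + 1)` LL-avoiding treeshelves on `n` labels, and `E n` of them have no left child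
at the root. For the exponential generating function `G` of `E` the recursion reads `G'' = G G'`,
hence `2 G' = G ^ 2 + 1`; then `P = G cos - 1 - sin` satisfies `2 cos * P' = P (P + 2)` and
`P(0) = 0`, so `P = 0`, i.e. `G = sec + tan`, and `G' (1 - sin) = 1` as formal power series.
Since `E (n + 1) ≤ n!`, the Cauchy product converges for `|z| < 1`.
-/

section Zigzag

open Finset
open scoped Nat

/-- The Euler zigzag numbers `1, 1, 1, 2, 5, 16, 61, …`. -/
def zigzag : ℕ → ℕ
  | 0 => 1
  | 1 => 1
  | n + 2 => ∑ k : Fin (n + 1), n.choose k * zigzag k * zigzag (n - k + 1)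

@[simp] lemma zigzag_zero : zigzag 0 = 1 := by simp [zigzag]

@[simp] lemma zigzag_one : zigzag 1 = 1 := by simp [zigzag]

lemma zigzag_add_two (n : ℕ) :
    zigzag (n + 2) = ∑ k ∈ range (n + 1), n.choose k * zigzag k * zigzag (n - k + 1) := by
  rw [zigzag, Fin.sum_univ_eq_sum_range (fun k => n.choose k * zigzag k * zigzag (n - k + 1))]

theorem zigzag_pos : ∀ n, 0 < zigzag n
  | 0 => by simp
  | 1 => by simp
  | n + 2 => by
    rw [zigzag_add_two]
    refine sum_pos (fun k hk => ?_) ⟨0, by simp⟩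
    have hk : k ≤ n := Nat.lt_succ_iff.mp (mem_range.mp hk)
    have := zigzag_pos k
    have := zigzag_pos (n - k + 1)
    have := Nat.choose_pos hk
    positivity

theorem zigzag_succ_le_factorial : ∀ n, zigzag (n + 1) ≤ n !
  | 0 => by simp
  | n + 1 => by
    have hle : ∀ k ≤ n, zigzag k ≤ k ! := fun k hk =>
      match k, hk with
      | 0, _ => by simp
      | j + 1, _ => (zigzag_succ_le_factorial j).trans (Nat.factorial_le j.le_succ)
    calc zigzag (n + 2)
        = ∑ k ∈ range (n + 1), n.choose k * zigzag k * zigzag (n - k + 1) := zigzag_add_two n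
      _ ≤ ∑ k ∈ range (n + 1), n.choose k * k ! * (n - k)! := by
          refine sum_le_sum fun k hk => ?_
          have hk : k ≤ n := Nat.lt_succ_iff.mp (mem_range.mp hk)
          gcongr
          exacts [hle k hk, zigzag_succ_le_factorial (n - k)]
      _ = ∑ _k ∈ range (n + 1), n ! :=
          sum_congr rfl fun k hk =>
            Nat.choose_mul_factorial_mul_factorial (Nat.lt_succ_iff.mp (mem_range.mp hk))
      _ = (n + 1)! := by simp [Nat.factorial_succ]

end Zigzag

namespace TShelf

lemma labels_eq_zero_iff {t : TShelf} : t.labels = 0 ↔ t = leaf := by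
  cases t <;> simp [labels]

lemma rootLabel_mem_labels {t : TShelf} (ht : t ≠ leaf) : t.rootLabel ∈ t.labels := by
  cases t with
  | leaf => exact absurd rfl ht
  | node a l r => simp [rootLabel, labels]

lemma isNode_eq_false_iff {t : TShelf} : t.isNode = false ↔ t = leaf := by
  cases t <;> simp [isNode]

lemma increasing_node_iff_s9 {a : ℕ} {l r : TShelf} :
    (node a l r).increasing = true ↔ (l ≠ leaf → a < l.rootLabel) ∧
      (r ≠ leaf → a < r.rootLabel) ∧ l.increasing = true ∧ r.increasing = true := by
  simp only [increasing, Bool.and_eq_true, Bool.or_eq_true, Bool.not_eq_true',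
    decide_eq_true_eq, isNode_eq_false_iff, or_iff_not_imp_left, and_assoc]

lemma rootLabel_le_of_mem_labels {t : TShelf} (ht : t.increasing = true) {x : ℕ}
    (hx : x ∈ t.labels) : t.rootLabel ≤ x := by
  induction t with
  | leaf => simp [labels] at hx
  | node a l r ihl ihr =>
    obtain ⟨hal, har, hl, hr⟩ := increasing_node_iff_s9.mp ht
    simp only [labels, Multiset.mem_cons, Multiset.mem_add] at hx
    rcases hx with rfl | hx | hx
    · exact le_rfl
    · have hne : l ≠ leaf := by rintro rfl; simp [labels] at hx
      exact ((hal hne).trans_le (ihl hl hx)).le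
    · have hne : r ≠ leaf := by rintro rfl; simp [labels] at hx
      exact ((har hne).trans_le (ihr hr hx)).le

lemma exists_eq_node_of_labels_eq_cons {t : TShelf} (ht : t.increasing = true) {a : ℕ}
    {M : Multiset ℕ} (ha : ∀ x ∈ M, a < x) (hM : t.labels = a ::ₘ M) :
    ∃ l r, t = node a l r ∧ l.labels + r.labels = M := by
  cases t with
  | leaf => simp [labels] at hM
  | node b l r =>
    have hba : b ≤ a := rootLabel_le_of_mem_labels ht (by simp [hM])
    have hb : b ∈ a ::ₘ M := by simp [← hM, labels]
    obtain rfl : b = a := by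
      rcases Multiset.mem_cons.mp hb with hb | hb
      · exact hb
      · exact absurd (ha b hb) hba.not_gt
    exact ⟨l, r, rfl, (Multiset.cons_inj_right b).mp (by simpa [labels] using hM)⟩

def IsLLShelf (t : TShelf) : Prop := t.increasing = true ∧ t.avoidsLL = true

lemma isLLShelf_leaf : IsLLShelf leaf := ⟨rfl, rfl⟩

lemma isLLShelf_node_iff {a : ℕ} {l r : TShelf} :
    IsLLShelf (node a l r) ↔ (l ≠ leaf → a < l.rootLabel) ∧
      (r ≠ leaf → a < r.rootLabel) ∧ l.left = leaf ∧ IsLLShelf l ∧ IsLLShelf r := by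
  rw [IsLLShelf, increasing_node_iff_s9]
  have hLL : (!(l.isNode && l.left.isNode)) = true ↔ l.left = leaf := by
    rcases l with _ | ⟨_, _ | _, _⟩ <;> simp [isNode, left]
  simp only [avoidsLL, Bool.and_eq_true, hLL, IsLLShelf]
  tauto

lemma isLLShelf_node {a : ℕ} {l r : TShelf} (ha : ∀ x ∈ l.labels + r.labels, a < x)
    (hl : IsLLShelf l) (hll : l.left = leaf) (hr : IsLLShelf r) : IsLLShelf (node a l r) :=
  isLLShelf_node_iff.mpr
    ⟨fun h => ha _ (Multiset.mem_add.mpr (.inl (rootLabel_mem_labels h))),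
      fun h => ha _ (Multiset.mem_add.mpr (.inr (rootLabel_mem_labels h))), hll, hl, hr⟩

def llShelves (M : Multiset ℕ) : Set TShelf := {t | t.labels = M ∧ IsLLShelf t}

def llShelvesNoLeft (M : Multiset ℕ) : Set TShelf :=
  {t | t.labels = M ∧ IsLLShelf t ∧ t.left = leaf}

lemma llShelves_zero : llShelves 0 = {leaf} := by
  ext t
  simp only [llShelves, Set.mem_ofPred_eq, labels_eq_zero_iff, Set.mem_singleton_iff]
  exact ⟨And.left, by rintro rfl; exact ⟨rfl, isLLShelf_leaf⟩⟩

lemma llShelvesNoLeft_zero : llShelvesNoLeft 0 = {leaf} := by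
  ext t
  simp only [llShelvesNoLeft, Set.mem_ofPred_eq, labels_eq_zero_iff, Set.mem_singleton_iff]
  exact ⟨And.left, by rintro rfl; exact ⟨rfl, isLLShelf_leaf, rfl⟩⟩

lemma llShelvesNoLeft_cons {a : ℕ} {M : Multiset ℕ} (ha : ∀ x ∈ M, a < x) :
    llShelvesNoLeft (a ::ₘ M) = node a leaf '' llShelves M := by
  ext t
  constructor
  · rintro ⟨hM, ht, hleft⟩
    obtain ⟨l, r, rfl, hlr⟩ := exists_eq_node_of_labels_eq_cons ht.1 ha hM
    obtain rfl : l = leaf := hleft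
    obtain ⟨-, -, -, -, hr⟩ := isLLShelf_node_iff.mp ht
    exact ⟨r, ⟨by simpa [labels] using hlr, hr⟩, rfl⟩
  · rintro ⟨r, ⟨rfl, hr⟩, rfl⟩
    refine ⟨by simp [labels], ?_, rfl⟩
    exact isLLShelf_node (by simpa [labels] using ha) isLLShelf_leaf rfl hr

lemma card_llShelvesNoLeft_cons {a : ℕ} {M : Multiset ℕ} (ha : ∀ x ∈ M, a < x) :
    Nat.card (llShelvesNoLeft (a ::ₘ M)) = Nat.card (llShelves M) := by
  rw [llShelvesNoLeft_cons ha]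
  exact Nat.card_image_of_injective (fun _ _ h => by injection h) _

def graft {a : ℕ} {s : Finset ℕ} (ha : ∀ x ∈ s, a < x) :
    (Σ A : s.powerset, llShelvesNoLeft A.1.val × llShelves (s \ A.1).val) →
      llShelves (a ::ₘ s.val)
  | ⟨A, l, r⟩ =>
    have hlr : l.1.labels + r.1.labels = s.val := by
      rw [l.2.1, r.2.1, Finset.sdiff_val,
        add_tsub_cancel_of_le (Finset.val_le_iff.mpr (Finset.mem_powerset.mp A.2))]
    ⟨node a l r, by rw [labels, hlr],
      isLLShelf_node (by rw [hlr]; exact ha) l.2.2.1 l.2.2.2 r.2.2⟩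

lemma graft_bijective {a : ℕ} {s : Finset ℕ} (ha : ∀ x ∈ s, a < x) :
    Function.Bijective (graft ha) := by
  constructor
  · rintro ⟨A, l, r⟩ ⟨A', l', r'⟩ h
    have h' := congrArg Subtype.val h
    simp only [graft, node.injEq, true_and] at h'
    obtain rfl : A = A' := Subtype.ext (Finset.val_inj.mp (l.2.1.symm.trans (h'.1 ▸ l'.2.1)))
    obtain rfl : l = l' := Subtype.ext h'.1
    obtain rfl : r = r' := Subtype.ext h'.2
    rfl
  · rintro ⟨t, hM, ht⟩
    obtain ⟨l, r, rfl, hlr⟩ := exists_eq_node_of_labels_eq_cons ht.1 ha hM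
    obtain ⟨-, -, hll, hl, hr⟩ := isLLShelf_node_iff.mp ht
    have hle : l.labels ≤ s.val := hlr ▸ Multiset.le_add_right _ _
    have hA : l.labels.toFinset.val = l.labels := (Multiset.nodup_of_le hle s.nodup).dedup
    have hAs : l.labels.toFinset ∈ s.powerset :=
      Finset.mem_powerset.mpr (Finset.val_le_iff.mp (by rwa [hA]))
    refine ⟨⟨⟨_, hAs⟩, ⟨l, hA.symm, hl, hll⟩, ⟨r, ?_, hr⟩⟩, rfl⟩
    rw [Finset.sdiff_val, hA, ← hlr, add_tsub_cancel_left]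

lemma card_llShelves_cons {a : ℕ} {s : Finset ℕ} (ha : ∀ x ∈ s, a < x)
    (hfin : ∀ A ⊆ s, Finite (llShelvesNoLeft A.val) ∧ Finite (llShelves (s \ A).val)) :
    Nat.card (llShelves (a ::ₘ s.val)) = ∑ A ∈ s.powerset,
      Nat.card (llShelvesNoLeft A.val) * Nat.card (llShelves (s \ A).val) := by
  have (A : s.powerset) : Finite (llShelvesNoLeft A.1.val × llShelves (s \ A.1).val) := by
    obtain ⟨_, _⟩ := hfin A.1 (Finset.mem_powerset.mp A.2)
    infer_instance
  rw [← Nat.card_eq_of_bijective _ (graft_bijective ha), Nat.card_sigma,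
    ← Finset.sum_coe_sort s.powerset]
  simp only [Nat.card_prod]

open Finset in
theorem card_llShelves (s : Finset ℕ) :
    Nat.card (llShelves s.val) = zigzag (#s + 1) ∧
      Nat.card (llShelvesNoLeft s.val) = zigzag #s := by
  induction s using Finset.strongInduction with
  | _ s ih =>
  rcases s.eq_empty_or_nonempty with rfl | hs
  · simp [llShelves_zero, llShelvesNoLeft_zero]
  set a := s.min' hs
  set s' := s.erase a
  have has : a ∈ s := s.min'_mem hs
  have ha : ∀ x ∈ s', a < x := fun x hx => s.min'_lt_of_mem_erase_min' hs hx
  have hsub : ∀ A ⊆ s', A ⊂ s := fun A hA => hA.trans_ssubset (erase_ssubset has)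
  have hval : s.val = a ::ₘ s'.val := by rw [erase_val, Multiset.cons_erase has]
  rw [hval, ← card_erase_add_one has, card_llShelvesNoLeft_cons ha,
    (ih s' (erase_ssubset has)).1]
  refine ⟨?_, rfl⟩
  have ihA (A) (hA : A ⊆ s') := ih A (hsub A hA)
  have ihB (A) (hA : A ⊆ s') := ih (s' \ A) (hsub _ sdiff_subset)
  -- every count is a positive zigzag number, so every fibre of the decomposition is finite
  rw [card_llShelves_cons ha fun A hA =>
    ⟨Nat.finite_of_card_ne_zero ((ihA A hA).2 ▸ (zigzag_pos _).ne'),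
      Nat.finite_of_card_ne_zero ((ihB A hA).1 ▸ (zigzag_pos _).ne')⟩]
  calc ∑ A ∈ s'.powerset, Nat.card (llShelvesNoLeft A.val) * Nat.card (llShelves (s' \ A).val)
      = ∑ A ∈ s'.powerset, zigzag #A * zigzag (#s' - #A + 1) := by
        refine sum_congr rfl fun A hA => ?_
        rw [(ihA A (mem_powerset.mp hA)).2, (ihB A (mem_powerset.mp hA)).1,
          card_sdiff_of_subset (mem_powerset.mp hA)]
    _ = ∑ k ∈ range (#s' + 1), (#s').choose k • (zigzag k * zigzag (#s' - k + 1)) :=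
        sum_powerset_apply_card (fun k => zigzag k * zigzag (#s' - k + 1))
    _ = zigzag (#s' + 2) := by simp only [zigzag_add_two, smul_eq_mul, mul_assoc]

theorem card_isShelf_avoidsLL (n : ℕ) :
    Nat.card {t : TShelf // IsShelf n t ∧ t.avoidsLL = true} = zigzag (n + 1) := by
  have h := (card_llShelves (Finset.Icc 1 n)).1
  rw [Nat.card_Icc, add_tsub_cancel_right] at h
  rw [← h]
  exact Nat.card_congr (Equiv.subtypeEquivRight fun t => by
    simp [IsShelf, llShelves, IsLLShelf, and_assoc])

end TShelf

namespace PowerSeries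

open Finset
open scoped Nat

theorem eq_zero_of_derivative_eq_mul {R : Type*} [CommRing R] [IsAddTorsionFree R]
    {A P : R⟦X⟧} (h : d⁄dX R P = A * P) (h0 : constantCoeff P = 0) : P = 0 := by
  ext n
  induction n using Nat.strong_induction_on with
  | _ n ih =>
  rcases n with _ | k
  · simpa using h0
  have hk : coeff k (d⁄dX R P) = 0 := by
    rw [h, coeff_mul]
    refine sum_eq_zero fun p hp => ?_
    rw [ih p.2 (by have := mem_antidiagonal.mp hp; omega), map_zero, mul_zero]
  rw [coeff_derivative, ← Nat.cast_succ, ← nsmul_eq_mul', smul_eq_zero] at hk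
  simpa using hk

theorem eq_zero_of_mul_derivative_eq_mul {K : Type*} [Field K] [CharZero K] {A B P : K⟦X⟧}
    (hB : constantCoeff B ≠ 0) (h : B * d⁄dX K P = A * P) (h0 : constantCoeff P = 0) :
    P = 0 :=
  eq_zero_of_derivative_eq_mul (A := B⁻¹ * A)
    (by rw [mul_assoc, ← h, ← mul_assoc, PowerSeries.inv_mul_cancel _ hB, one_mul]) h0

variable {K : Type*} [Field K]

def egf (a : ℕ → K) : K⟦X⟧ := mk fun n => a n / n !

@[simp]
lemma coeff_egf (a : ℕ → K) (n : ℕ) : coeff n (egf a) = a n / n ! := coeff_mk _ _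

@[simp]
lemma constantCoeff_egf (a : ℕ → K) : constantCoeff (egf a) = a 0 := by
  simp [← coeff_zero_eq_constantCoeff_apply]

lemma derivative_mul (f g : K⟦X⟧) : d⁄dX K (f * g) = d⁄dX K f * g + f * d⁄dX K g := by
  rw [Derivation.leibniz, smul_eq_mul, smul_eq_mul]
  ring

variable [CharZero K]

lemma derivative_egf (a : ℕ → K) : d⁄dX K (egf a) = egf fun n => a (n + 1) := by
  ext n
  rw [coeff_derivative, coeff_egf, coeff_egf, Nat.factorial_succ]
  push_cast
  field_simp

lemma egf_mul_egf (a b : ℕ → K) :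
    egf a * egf b = egf fun n => ∑ k ∈ range (n + 1), (n.choose k : K) * a k * b (n - k) := by
  ext n
  rw [coeff_mul, Nat.sum_antidiagonal_eq_sum_range_succ_mk, coeff_egf, sum_div]
  refine sum_congr rfl fun k hk => ?_
  rw [coeff_egf, coeff_egf, Nat.cast_choose K (Nat.lt_succ_iff.mp (mem_range.mp hk))]
  have : (n ! : K) ≠ 0 := Nat.cast_ne_zero.mpr n.factorial_ne_zero
  field_simp

lemma derivative_sin : d⁄dX K (sin K) = cos K := by
  ext n
  simp only [coeff_derivative, sin, cos, coeff_mk, Nat.even_add_one, ite_not]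
  split_ifs with hn
  · obtain ⟨m, rfl⟩ := even_iff_two_dvd.mp hn
    rw [show (2 * m + 1) / 2 = 2 * m / 2 by omega, Nat.factorial_succ]
    simp only [map_div₀, map_pow, map_neg, map_one, map_natCast]
    push_cast
    have : 2 * (m : K) + 1 ≠ 0 := by exact_mod_cast (2 * m).succ_ne_zero
    field_simp
  · simp

lemma derivative_cos : d⁄dX K (cos K) = -sin K := by
  ext n
  simp only [coeff_derivative, sin, cos, coeff_mk, Nat.even_add_one, ite_not, map_neg]
  split_ifs with hn
  · simp
  · obtain ⟨m, rfl⟩ := Nat.not_even_iff_odd.mp hn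
    rw [show (2 * m + 1 + 1) / 2 = (2 * m + 1) / 2 + 1 by omega, Nat.factorial_succ]
    simp only [map_div₀, map_pow, map_neg, map_one, map_natCast]
    push_cast
    have : 2 * (m : K) + 1 + 1 ≠ 0 := by exact_mod_cast (2 * m + 1).succ_ne_zero
    field_simp
    ring

@[simp] lemma constantCoeff_sin : constantCoeff (sin K) = 0 := by
  simp [sin]

@[simp] lemma constantCoeff_cos : constantCoeff (cos K) = 1 := by
  simp [cos]

lemma sin_sq_add_cos_sq : sin K ^ 2 + cos K ^ 2 = 1 := by
  refine derivative.ext ?_ (by simp)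
  rw [map_add, derivative_pow, derivative_pow, derivative_sin, derivative_cos, derivative_one]
  ring

lemma derivative_derivative_egf_zigzag :
    d⁄dX K (d⁄dX K (egf fun n => (zigzag n : K))) =
      (egf fun n => (zigzag n : K)) * d⁄dX K (egf fun n => (zigzag n : K)) := by
  rw [derivative_egf, derivative_egf, egf_mul_egf]
  congr 1
  ext n
  rw [zigzag_add_two]
  push_cast
  rfl

lemma two_mul_derivative_egf_zigzag :
    2 * d⁄dX K (egf fun n => (zigzag n : K)) = (egf fun n => (zigzag n : K)) ^ 2 + 1 := by
  refine derivative.ext ?_ ?_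
  · rw [two_mul, map_add, map_add, derivative_pow, derivative_one,
      derivative_derivative_egf_zigzag]
    ring
  · rw [derivative_egf]
    norm_num [map_ofNat]

lemma egf_zigzag_mul_cos : (egf fun n => (zigzag n : K)) * cos K = 1 + sin K := by
  set G := egf fun n => (zigzag n : K)
  have hG := two_mul_derivative_egf_zigzag (K := K)
  have hSC := sin_sq_add_cos_sq (K := K)
  rw [← sub_eq_zero, sub_add_eq_sub_sub]
  refine eq_zero_of_mul_derivative_eq_mul (A := G * cos K - 1 - sin K + 2) (B := 2 * cos K)
    (by simp [map_ofNat]) ?_ (by simp [G])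
  rw [map_sub, map_sub, derivative_mul, derivative_cos, derivative_sin, derivative_one]
  linear_combination cos K ^ 2 * hG - hSC

theorem egf_zigzag_succ_mul_one_sub_sin :
    (egf fun n => (zigzag (n + 1) : K)) * (1 - sin K) = 1 := by
  set G := egf fun n => (zigzag n : K)
  have hG := two_mul_derivative_egf_zigzag (K := K)
  have hGC := egf_zigzag_mul_cos (K := K)
  have hSC := sin_sq_add_cos_sq (K := K)
  rw [derivative_egf] at hG
  have hC : 2 * cos K ^ 2 ≠ 0 := by
    intro h
    simpa [map_ofNat] using congrArg constantCoeff h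
  refine sub_eq_zero.mp ((mul_eq_zero.mp ?_).resolve_left hC)
  linear_combination (1 - sin K) * cos K ^ 2 * hG
    + (1 - sin K) * (G * cos K + 1 + sin K) * hGC - (1 + sin K) * hSC

section Evaluation

variable {𝕜 : Type*} [NormedField 𝕜]

lemma summable_norm_coeff_mul_pow {f : 𝕜⟦X⟧} {x : 𝕜} (hf : ∀ n, ‖coeff n f‖ ≤ 1)
    (hx : ‖x‖ < 1) : Summable fun n => ‖coeff n f * x ^ n‖ :=
  (summable_geometric_of_lt_one (norm_nonneg x) hx).of_nonneg_of_le (fun _ => norm_nonneg _)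
    fun n => by
      rw [norm_mul, norm_pow]
      exact mul_le_of_le_one_left (by positivity) (hf n)

lemma hasSum_coeff_mul_mul_pow [CompleteSpace 𝕜] {f g : 𝕜⟦X⟧} {x : 𝕜}
    (hf : Summable fun n => ‖coeff n f * x ^ n‖)
    (hg : Summable fun n => ‖coeff n g * x ^ n‖) :
    HasSum (fun n => coeff n (f * g) * x ^ n)
      ((∑' n, coeff n f * x ^ n) * ∑' n, coeff n g * x ^ n) := by
  have hcoeff (n : ℕ) : coeff n (f * g) * x ^ n =
      ∑ kl ∈ antidiagonal n, coeff kl.1 f * x ^ kl.1 * (coeff kl.2 g * x ^ kl.2) := by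
    rw [coeff_mul, sum_mul]
    refine sum_congr rfl fun kl hkl => ?_
    rw [← mem_antidiagonal.mp hkl, pow_add]
    ring
  simp_rw [hcoeff]
  rw [tsum_mul_tsum_eq_tsum_sum_antidiagonal_of_summable_norm hf hg]
  exact (summable_norm_sum_mul_antidiagonal_of_summable_norm hf hg).of_norm.hasSum

lemma hasSum_coeff_one_mul_pow (x : 𝕜) :
    HasSum (fun n => coeff n (1 : 𝕜⟦X⟧) * x ^ n) 1 := by
  convert hasSum_single (f := fun n => coeff n (1 : 𝕜⟦X⟧) * x ^ n) 0 fun n hn => by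
    simp [coeff_one, hn]
  simp

end Evaluation

lemma hasSum_coeff_sin_mul_pow (x : ℝ) :
    HasSum (fun n => coeff n (sin ℝ) * x ^ n) (Real.sin x) := by
  have hodd : Function.Injective fun k : ℕ => 2 * k + 1 := fun a b h => by simpa using h
  refine (hodd.hasSum_iff fun n hn => ?_).mp ?_
  · have : Even n := by
      by_contra h
      obtain ⟨k, rfl⟩ := Nat.not_even_iff_odd.mp h
      exact hn ⟨k, rfl⟩
    simp [sin, this]
  · convert Real.hasSum_sin x using 2 with k
    simp [sin, show (2 * k + 1) / 2 = k by omega]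
    ring

lemma norm_coeff_one_sub_sin_le_one (n : ℕ) : ‖coeff n (1 - sin ℝ)‖ ≤ 1 := by
  rcases n with _ | n
  · simp
  · have : (1 : ℝ) ≤ (n + 1)! := by exact_mod_cast (n + 1).factorial_pos
    simp only [map_sub, coeff_one, sin, coeff_mk, Nat.add_one_ne_zero, if_false]
    split_ifs <;> simp [inv_le_one_of_one_le₀ this]

lemma hasSum_coeff_one_sub_sin_mul_pow (x : ℝ) :
    HasSum (fun n => coeff n (1 - sin ℝ) * x ^ n) (1 - Real.sin x) := by
  simp only [map_sub, sub_mul]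
  exact (hasSum_coeff_one_mul_pow x).sub (hasSum_coeff_sin_mul_pow x)

lemma norm_coeff_egf_zigzag_succ_le_one (n : ℕ) :
    ‖coeff n (egf fun n => (zigzag (n + 1) : ℝ))‖ ≤ 1 := by
  rw [coeff_egf, Real.norm_of_nonneg (by positivity)]
  exact div_le_one_of_le₀ (by exact_mod_cast zigzag_succ_le_factorial n) (by positivity)

theorem hasSum_zigzag_succ_mul_pow_div_factorial {z : ℝ} (hz : |z| < 1) :
    HasSum (fun n => (zigzag (n + 1) : ℝ) * z ^ n / n !) (1 / (1 - Real.sin z)) := by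
  have hF := summable_norm_coeff_mul_pow norm_coeff_egf_zigzag_succ_le_one hz
  have hU := summable_norm_coeff_mul_pow norm_coeff_one_sub_sin_le_one hz
  have hprod := hasSum_coeff_mul_mul_pow hF hU
  rw [egf_zigzag_succ_mul_one_sub_sin, (hasSum_coeff_one_sub_sin_mul_pow z).tsum_eq] at hprod
  have hsum := hF.of_norm.hasSum
  rw [eq_one_div_of_mul_eq_one_left (hprod.unique (hasSum_coeff_one_mul_pow z))] at hsum
  simpa only [coeff_egf, div_mul_eq_mul_div] using hsum

end PowerSeries

/-- treeshelves of size `n` avoiding "left child having a left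
child" have e.g.f. `1/(1 - sin z)` (shifted Euler numbers). -/
theorem stmt9 :
    ∃ ε > (0 : ℝ), ∀ z : ℝ, |z| < ε →
      HasSum (fun n : ℕ =>
        (Nat.card {t : TShelf // TShelf.IsShelf n t ∧ t.avoidsLL = true} : ℝ) *
          z ^ n / (Nat.factorial n : ℝ))
        (1 / (1 - Real.sin z)) := by
  refine ⟨1, one_pos, fun z hz => ?_⟩
  simp_rw [TShelf.card_isShelf_avoidsLL]
  exact PowerSeries.hasSum_zigzag_succ_mul_pow_div_factorial hz
end
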